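/- Let κ > 0, c ∈ (0,1), and λ ∈ (0, π²/(4c²κ)). Then for every a ∈ [0, 1−c], B(a) ≤ 2κ·√λ·sin(c√(κλ))·sinh(√λ·(1−c)). -/

import Mathlib

/-- The constant term `B(a)` in `∂_{β₁} f`. -/
noncomputable def B (c κ lam a : ℝ) : ℝ :=
  -2 * Real.sqrt (lam * κ) * Real.cos (c * Real.sqrt (κ * lam)) * Real.cosh (Real.sqrt lam * (1 - c))
  + (κ - 1) * Real.sqrt lam * Real.sin (c * Real.sqrt (κ * lam)) * Real.sinh (Real.sqrt lam * (1 - c))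
  - (κ + 1) * Real.sqrt lam * Real.sin (c * Real.sqrt (κ * lam)) * Real.sinh (Real.sqrt lam * (2 * a + c - 1))

theorem stmt10 (κ c lam : ℝ) (hκ : 0 < κ) (hc : c ∈ Set.Ioo (0:ℝ) 1)
    (hlam : lam ∈ Set.Ioo 0 (Real.pi ^ 2 / (4 * c ^ 2 * κ))) :
    ∀ a ∈ Set.Icc (0:ℝ) (1 - c),
      B c κ lam a ≤ 2 * κ * Real.sqrt lam * Real.sin (c * Real.sqrt (κ * lam)) *
        Real.sinh (Real.sqrt lam * (1 - c)) := by
  intro a ha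
  obtain ⟨hc0, hc1⟩ := hc
  obtain ⟨hl0, hl1⟩ := hlam
  have hπ : 0 < Real.pi := Real.pi_pos
  -- angle bounds
  have hsq0 : (0:ℝ) ≤ Real.sqrt (κ * lam) := Real.sqrt_nonneg _
  have hsqlt : Real.sqrt (κ * lam) < Real.pi / (2 * c) := by
    rw [Real.sqrt_lt' (by positivity)]
    have : κ * lam < κ * (Real.pi ^ 2 / (4 * c ^ 2 * κ)) := by
      exact mul_lt_mul_of_pos_left hl1 hκ
    calc κ * lam < κ * (Real.pi ^ 2 / (4 * c ^ 2 * κ)) := this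
      _ = (Real.pi / (2 * c)) ^ 2 := by field_simp; ring
  have ht1 : c * Real.sqrt (κ * lam) < Real.pi / 2 := by
    have := (mul_lt_mul_of_pos_left hsqlt hc0)
    calc c * Real.sqrt (κ * lam) < c * (Real.pi / (2 * c)) := this
      _ = Real.pi / 2 := by field_simp
  have ht0 : 0 ≤ c * Real.sqrt (κ * lam) := by positivity
  have hs : 0 ≤ Real.sin (c * Real.sqrt (κ * lam)) :=
    Real.sin_nonneg_of_nonneg_of_le_pi ht0 (le_trans ht1.le (by linarith))
  have hco : 0 ≤ Real.cos (c * Real.sqrt (κ * lam)) :=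
    Real.cos_nonneg_of_mem_Icc ⟨by linarith, ht1.le⟩
  have hch : 0 ≤ Real.cosh (Real.sqrt lam * (1 - c)) := (Real.cosh_pos _).le
  have hsh : 0 ≤ Real.sinh (Real.sqrt lam * (1 - c)) :=
    by rw [← Real.sinh_zero]; exact Real.sinh_le_sinh.mpr (mul_nonneg (Real.sqrt_nonneg _) (by linarith))
  have hsl : 0 ≤ Real.sqrt lam := Real.sqrt_nonneg _
  have hslk : 0 ≤ Real.sqrt (lam * κ) := Real.sqrt_nonneg _
  have hkey : -Real.sinh (Real.sqrt lam * (1 - c)) ≤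
      Real.sinh (Real.sqrt lam * (2 * a + c - 1)) := by
    rw [← Real.sinh_neg]
    apply Real.sinh_le_sinh.mpr
    have ha0 := ha.1
    nlinarith [Real.sqrt_nonneg lam]
  unfold B
  nlinarith [mul_nonneg (mul_nonneg hslk hco) hch,
    mul_nonneg (mul_nonneg (mul_nonneg hsl hs) (by linarith : (0:ℝ) ≤ κ + 1))
      (by linarith : 0 ≤ Real.sinh (Real.sqrt lam * (1 - c)) + Real.sinh (Real.sqrt lam * (2 * a + c - 1)))]
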